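/- arXiv:1603.05433 — 2 statements merged into one kernel-verified Lean document; each statement's English description precedes it below -/
import Mathlib

section
/- Let m, k, l be natural numbers with k + l < m − 1, and let C_{j,h}(m,k,l) be the coefficients of the dual constrained Bernstein basis in the Bernstein basis, D_j^{(m,k,l)} = Σ_{h=k+1}^{m−l−1} C_{j,h} Bᵐ_h. Then for every h with k+1 ≤ h ≤ m−l−2, C_{k+1,h} = [ (h−m)(h−k)(h+k+3) / ((h+1)((h−m)² − (l+1)²)) ] · C_{k+1,h+1}. -/
/-!
For the pairing `⟨p, q⟩ = ∫₀¹ p q`, the coefficient matrix `C` of the dual basis is the inverse of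
the Gram matrix of `B^m_{k+1}, …, B^m_{m-l-1}`, hence symmetric. Consequently, if
`q = ∑ c_h B^m_h` is orthogonal to every `B^m_h` with `h ≠ k + 1`, then `c_h = C_{k+1,h} ⟨B^m_{k+1}, q⟩`.
Such coefficients can be written down explicitly: by the Beta integral, `⟨B^m_{h'}, q⟩` is an
alternating binomial sum of the values of a polynomial of degree `m - k - l - 3` in `h`, i.e. a
vanishing `(m - k - l - 2)`-th finite difference. The recurrence is the ratio `c_h / c_{h+1}`.
-/

open Finset intervalIntegral Polynomial
open scoped Nat

namespace LinearMap.BilinForm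

variable {R M ι : Type*} [CommRing R] [AddCommGroup M] [Module R M] [DecidableEq ι]
  {β : LinearMap.BilinForm R M} {s : Finset ι} {b D : ι → M} {C : ι → ι → R}

theorem apply_sum_smul_of_dual
    (hdual : ∀ j ∈ s, ∀ h ∈ s, β (D j) (b h) = if j = h then 1 else 0)
    {j : ι} (hj : j ∈ s) (c : ι → R) : β (D j) (∑ h ∈ s, c h • b h) = c j := by
  rw [map_sum, sum_eq_single_of_mem j hj fun h hh hne ↦ by simp [hdual j hj h hh, hne.symm]]
  simp [hdual j hj j hj]

theorem dual_coeff_symm (hβ : β.IsSymm) (hC : ∀ j ∈ s, D j = ∑ h ∈ s, C j h • b h)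
    (hdual : ∀ j ∈ s, ∀ h ∈ s, β (D j) (b h) = if j = h then 1 else 0)
    {j h : ι} (hj : j ∈ s) (hh : h ∈ s) : C j h = C h j :=
  calc C j h = β (D h) (D j) := by rw [hC j hj, apply_sum_smul_of_dual hdual hh]
    _ = β (D j) (D h) := hβ.eq _ _
    _ = C h j := by rw [hC h hh, apply_sum_smul_of_dual hdual hj]

theorem coeff_eq_dual_coeff_mul (hβ : β.IsSymm) (hC : ∀ j ∈ s, D j = ∑ h ∈ s, C j h • b h)
    (hdual : ∀ j ∈ s, ∀ h ∈ s, β (D j) (b h) = if j = h then 1 else 0)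
    (c : ι → R) {h₀ : ι} (hh₀ : h₀ ∈ s)
    (horth : ∀ h ∈ s, h ≠ h₀ → β (b h) (∑ i ∈ s, c i • b i) = 0) {j : ι} (hj : j ∈ s) :
    c j = C h₀ j * β (b h₀) (∑ i ∈ s, c i • b i) := by
  set q := ∑ i ∈ s, c i • b i
  calc c j = β (D j) q := (apply_sum_smul_of_dual hdual hj c).symm
    _ = ∑ h ∈ s, C j h * β (b h) q := by simp [hC j hj, map_sum]
    _ = C j h₀ * β (b h₀) q :=
      sum_eq_single_of_mem h₀ hh₀ fun h hh hne ↦ by rw [horth h hh hne, mul_zero]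
    _ = C h₀ j * β (b h₀) q := by rw [dual_coeff_symm hβ hC hdual hj hh₀]

end LinearMap.BilinForm

theorem integral_pow_mul_one_sub_pow (a b : ℕ) :
    ∫ x in (0:ℝ)..1, x ^ a * (1 - x) ^ b = a ! * b ! / (a + b + 1)! := by
  have hbeta := Complex.Gamma_mul_Gamma_eq_betaIntegral (s := a + 1) (t := b + 1)
    (by simp; positivity) (by simp; positivity)
  have hint : Complex.betaIntegral (a + 1) (b + 1) =
      ((∫ x in (0:ℝ)..1, x ^ a * (1 - x) ^ b : ℝ) : ℂ) := by
    rw [Complex.betaIntegral, ← intervalIntegral.integral_ofReal]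
    congr 1 with x
    simp [← Complex.cpow_natCast]
  rw [hint, show (a + 1 : ℂ) + (b + 1) = ((a + b + 1 : ℕ) : ℂ) + 1 by push_cast; ring,
    Complex.Gamma_nat_eq_factorial, Complex.Gamma_nat_eq_factorial,
    Complex.Gamma_nat_eq_factorial] at hbeta
  rw [eq_div_iff (by positivity), mul_comm]
  exact_mod_cast hbeta.symm

noncomputable def unitIntervalPairing : LinearMap.BilinForm ℝ ℝ[X] :=
  LinearMap.mk₂ ℝ (fun p q ↦ ∫ u in (0:ℝ)..1, p.eval u * q.eval u)
    (fun p₁ p₂ q ↦ by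
      simp only [eval_add, add_mul]
      exact integral_add ((by fun_prop : Continuous _).intervalIntegrable _ _)
        ((by fun_prop : Continuous _).intervalIntegrable _ _))
    (fun a p q ↦ by simp [mul_assoc])
    (fun p q₁ q₂ ↦ by
      simp only [eval_add, mul_add]
      exact integral_add ((by fun_prop : Continuous _).intervalIntegrable _ _)
        ((by fun_prop : Continuous _).intervalIntegrable _ _))
    (fun a p q ↦ by simp [mul_left_comm])

theorem unitIntervalPairing_apply (p q : ℝ[X]) :
    unitIntervalPairing p q = ∫ u in (0:ℝ)..1, p.eval u * q.eval u := rfl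

theorem unitIntervalPairing_isSymm : unitIntervalPairing.IsSymm :=
  ⟨fun p q ↦ by simp only [unitIntervalPairing_apply, mul_comm]⟩

theorem unitIntervalPairing_bernsteinPolynomial {m i j : ℕ} (hi : i ≤ m) (hj : j ≤ m) :
    unitIntervalPairing (bernsteinPolynomial ℝ m i) (bernsteinPolynomial ℝ m j) =
      m.choose i * m.choose j * ((i + j)! * (2 * m - (i + j))! / (2 * m + 1)!) := by
  have hprod : ∀ u : ℝ, (bernsteinPolynomial ℝ m i).eval u * (bernsteinPolynomial ℝ m j).eval u =
      m.choose i * m.choose j * (u ^ (i + j) * (1 - u) ^ (2 * m - (i + j))) := fun u ↦ by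
    simp only [bernsteinPolynomial, eval_mul, eval_pow, eval_natCast, eval_X, eval_sub, eval_one]
    rw [show 2 * m - (i + j) = (m - i) + (m - j) by omega]
    ring
  rw [unitIntervalPairing_apply]
  simp only [hprod, integral_const_mul, integral_pow_mul_one_sub_pow]
  rw [show i + j + (2 * m - (i + j)) + 1 = 2 * m + 1 by omega]

theorem Polynomial.sum_range_alternating_choose_mul_eval_eq_zero {R : Type*} [CommRing R]
    {p : R[X]} {n : ℕ} (hp : p.natDegree < n) (y : R) :
    ∑ i ∈ range (n + 1), (-1) ^ (n - i) * n.choose i * p.eval (y + i) = 0 := by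
  have := congrFun (fwdDiff_iter_eq_zero_of_degree_lt hp) y
  rw [fwdDiff_iter_eq_sum_shift] at this
  simpa [zsmul_eq_mul] using this

theorem ascPochhammer_eval_natCast_add_one (a r : ℕ) :
    (ascPochhammer ℝ r).eval ((a : ℝ) + 1) = (a + r)! / a ! := by
  rw [eq_div_iff (by positivity), ← Nat.factorial_mul_ascFactorial, ← Nat.cast_add_one,
    ascPochhammer_nat_eq_natCast_ascFactorial]
  push_cast
  ring

/-- As a function of `i`, the summand is a polynomial of degree `r + s < n`. -/
theorem sum_range_alternating_choose_mul_factorial_div_eq_zero {n r s : ℕ} (hrs : r + s < n)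
    (a b : ℕ) :
    ∑ i ∈ range (n + 1), (-1) ^ (n - i) * n.choose i *
      ((a + i + r)! / (a + i)! * ((b + (n - i) + s)! / (b + (n - i))!) : ℝ) = 0 := by
  set p : ℝ[X] := (ascPochhammer ℝ r).comp (X + C ((a + 1 : ℕ) : ℝ)) *
    (ascPochhammer ℝ s).comp (C ((b + n + 1 : ℕ) : ℝ) - X)
  have hp : p.natDegree < n := by
    have hlin : (C ((b + n + 1 : ℕ) : ℝ) - X).natDegree = 1 := by
      rw [← neg_sub, natDegree_neg, natDegree_X_sub_C]
    calc p.natDegree ≤ r * 1 + s * 1 := by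
          refine natDegree_mul_le.trans (add_le_add ?_ ?_)
          · rw [natDegree_comp, ascPochhammer_natDegree, natDegree_X_add_C]
          · rw [natDegree_comp, ascPochhammer_natDegree, hlin]
      _ < n := by omega
  rw [← sum_range_alternating_choose_mul_eval_eq_zero hp 0]
  refine sum_congr rfl fun i hi ↦ ?_
  have hin : i ≤ n := Nat.lt_succ_iff.mp (mem_range.mp hi)
  simp only [p, eval_mul, eval_comp, eval_add, eval_sub, eval_X, eval_C]
  rw [show (0 : ℝ) + i + ((a + 1 : ℕ) : ℝ) = ((a + i : ℕ) : ℝ) + 1 by push_cast; ring,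
    show ((b + n + 1 : ℕ) : ℝ) - (0 + i) = ((b + (n - i) : ℕ) : ℝ) + 1 by
      push_cast [Nat.cast_sub hin]; ring,
    ascPochhammer_eval_natCast_add_one, ascPochhammer_eval_natCast_add_one]

/-- Up to a factor independent of `h`, the Bernstein coefficient `C_{k+1,h}` of `D_{k+1}`. -/
noncomputable def firstRowCoeff (m k l h : ℕ) : ℝ :=
  (-1) ^ (m - l - 1 - h) * (h ! * (m - h)!) /
    ((h - k - 1)! * (h + k + 2)! * (m - l - 1 - h)! * (m + l + 1 - h)!)

theorem firstRowCoeff_ne_zero (m k l h : ℕ) : firstRowCoeff m k l h ≠ 0 := by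
  simp [firstRowCoeff, Nat.factorial_ne_zero]

theorem firstRowCoeff_eq_mul_succ {m k l h : ℕ} (hk : k + 1 ≤ h) (hh : h + 1 ≤ m - l - 1) :
    firstRowCoeff m k l h =
      ((h - m : ℝ) * (h - k) * (h + k + 3)) / ((h + 1) * ((h - m) ^ 2 - (l + 1) ^ 2)) *
        firstRowCoeff m k l (h + 1) := by
  obtain ⟨i, rfl⟩ : ∃ i, h = k + 1 + i := ⟨h - k - 1, by omega⟩
  obtain ⟨t, rfl⟩ : ∃ t, m = k + l + 3 + i + t := ⟨m - (k + l + 3 + i), by omega⟩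
  simp only [firstRowCoeff, show k + 1 + i - k - 1 = i by omega,
    show k + 1 + i + 1 - k - 1 = i + 1 by omega,
    show k + l + 3 + i + t - l - 1 - (k + 1 + i) = t + 1 by omega,
    show k + l + 3 + i + t - l - 1 - (k + 1 + i + 1) = t by omega,
    show k + l + 3 + i + t - (k + 1 + i) = t + l + 1 + 1 by omega,
    show k + l + 3 + i + t - (k + 1 + i + 1) = t + l + 1 by omega,
    show k + l + 3 + i + t + l + 1 - (k + 1 + i) = t + 2 * l + 2 + 1 by omega,
    show k + l + 3 + i + t + l + 1 - (k + 1 + i + 1) = t + 2 * l + 2 by omega,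
    show k + 1 + i + 1 + k + 2 = k + 1 + i + k + 2 + 1 by omega]
  rw [Nat.factorial_succ i, Nat.factorial_succ t, Nat.factorial_succ (t + l + 1),
    Nat.factorial_succ (t + 2 * l + 2), Nat.factorial_succ (k + 1 + i),
    Nat.factorial_succ (k + 1 + i + k + 2), pow_succ]
  have hden : ((k + 1 + i : ℕ) - (k + l + 3 + i + t : ℕ) : ℝ) ^ 2 - ((l : ℝ) + 1) ^ 2
      = ((t : ℝ) + 1) * (t + 2 * l + 3) := by push_cast; ring
  rw [hden]
  field_simp
  push_cast
  ring

theorem unitIntervalPairing_bernsteinPolynomial_sum_firstRowCoeff_eq_zero {m k l h' : ℕ}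
    (hk : k + 1 < h') (hh' : h' ≤ m - l - 1) :
    unitIntervalPairing (bernsteinPolynomial ℝ m h')
      (∑ h ∈ Icc (k + 1) (m - l - 1), firstRowCoeff m k l h • bernsteinPolynomial ℝ m h) = 0 := by
  obtain ⟨r, rfl⟩ : ∃ r, h' = k + 2 + r := ⟨h' - (k + 2), by omega⟩
  obtain ⟨s, rfl⟩ : ∃ s, m = k + l + 3 + r + s := ⟨m - (k + l + 3 + r), by omega⟩
  set m := k + l + 3 + r + s
  set n := r + s + 1
  have hreindex : Icc (k + 1) (m - l - 1) = (range (n + 1)).map (addLeftEmbedding (k + 1)) := by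
    rw [Nat.range_succ_eq_Icc_zero, map_add_left_Icc, add_zero]
    congr 1
    omega
  have hterm : ∀ i ∈ range (n + 1),
      firstRowCoeff m k l (k + 1 + i) *
          unitIntervalPairing (bernsteinPolynomial ℝ m (k + 2 + r))
            (bernsteinPolynomial ℝ m (k + 1 + i)) =
        m ! * m.choose (k + 2 + r) / ((2 * m + 1)! * n !) *
          ((-1) ^ (n - i) * n.choose i * ((2 * k + 3 + i + r)! / (2 * k + 3 + i)! *
            ((2 * l + 2 + (n - i) + s)! / (2 * l + 2 + (n - i))!))) := by
    intro i hi
    have hin : i ≤ n := Nat.lt_succ_iff.mp (mem_range.mp hi)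
    have hchoose_m : (m.choose (k + 1 + i) : ℝ) * (k + 1 + i)! * (m - (k + 1 + i))! = m ! := by
      exact_mod_cast Nat.choose_mul_factorial_mul_factorial (by omega)
    have hchoose_n : (n.choose i : ℝ) * i ! * (n - i)! = n ! := by
      exact_mod_cast Nat.choose_mul_factorial_mul_factorial hin
    have hchoose_ne : (n.choose i : ℝ) ≠ 0 := by exact_mod_cast (Nat.choose_pos hin).ne'
    rw [unitIntervalPairing_bernsteinPolynomial (by omega) (by omega), firstRowCoeff,
      show k + 1 + i - k - 1 = i by omega, show m - l - 1 - (k + 1 + i) = n - i by omega,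
      show m + l + 1 - (k + 1 + i) = 2 * l + 2 + (n - i) by omega,
      show k + 1 + i + k + 2 = 2 * k + 3 + i by omega,
      show k + 2 + r + (k + 1 + i) = 2 * k + 3 + i + r by omega,
      show 2 * m - (2 * k + 3 + i + r) = 2 * l + 2 + (n - i) + s by omega,
      ← hchoose_m, ← hchoose_n]
    field_simp
  rw [map_sum, hreindex, sum_map]
  simp only [addLeftEmbedding_apply, map_smul, smul_eq_mul]
  rw [sum_congr rfl hterm, ← mul_sum,
    sum_range_alternating_choose_mul_factorial_div_eq_zero (by omega), mul_zero]

theorem dual_basis_coeff_first_row_recurrence_general (m k l : ℕ)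
    (D : ℕ → Polynomial ℝ) (C : ℕ → ℕ → ℝ)
    (hdual : ∀ j ∈ Finset.Icc (k + 1) (m - l - 1), ∀ h ∈ Finset.Icc (k + 1) (m - l - 1),
      (∫ u in (0:ℝ)..1, (D j).eval u * (bernsteinPolynomial ℝ m h).eval u)
        = if j = h then 1 else 0)
    (hC : ∀ j ∈ Finset.Icc (k + 1) (m - l - 1),
      D j = ∑ h ∈ Finset.Icc (k + 1) (m - l - 1), C j h • bernsteinPolynomial ℝ m h) :
    ∀ h : ℕ, k + 1 ≤ h → h ≤ m - l - 2 →
      C (k + 1) h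
        = (((h : ℝ) - m) * ((h : ℝ) - k) * ((h : ℝ) + k + 3)) /
            (((h : ℝ) + 1) * (((h : ℝ) - m) ^ 2 - ((l : ℝ) + 1) ^ 2)) *
          C (k + 1) (h + 1) := by
  intro h hk hh
  set S := Icc (k + 1) (m - l - 1)
  set γ := unitIntervalPairing (bernsteinPolynomial ℝ m (k + 1))
    (∑ i ∈ S, firstRowCoeff m k l i • bernsteinPolynomial ℝ m i)
  have key : ∀ j ∈ S, firstRowCoeff m k l j = C (k + 1) j * γ :=
    fun j hj ↦ LinearMap.BilinForm.coeff_eq_dual_coeff_mul unitIntervalPairing_isSymm hC hdual _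
      (mem_Icc.2 ⟨le_rfl, by omega⟩)
      (fun h' hh' hne ↦ unitIntervalPairing_bernsteinPolynomial_sum_firstRowCoeff_eq_zero
        (by have := (mem_Icc.1 hh').1; omega) (mem_Icc.1 hh').2) hj
  have hh_mem : h ∈ S := mem_Icc.2 ⟨hk, by omega⟩
  have hγ : γ ≠ 0 := right_ne_zero_of_mul ((key h hh_mem).symm ▸ firstRowCoeff_ne_zero m k l h)
  have hC_eq : ∀ j ∈ S, C (k + 1) j = firstRowCoeff m k l j / γ :=
    fun j hj ↦ by rw [key j hj, mul_div_cancel_right₀ _ hγ]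
  rw [hC_eq h hh_mem, hC_eq (h + 1) (mem_Icc.2 ⟨by omega, by omega⟩),
    firstRowCoeff_eq_mul_succ hk (by omega), mul_div_assoc]

theorem dual_basis_coeff_first_row_recurrence (m k l : ℕ) (hklm : k + l + 1 < m)
    (D : ℕ → Polynomial ℝ) (C : ℕ → ℕ → ℝ)
    (hmem : ∀ j ∈ Finset.Icc (k + 1) (m - l - 1),
      D j ∈ Submodule.span ℝ
        ((fun i => bernsteinPolynomial ℝ m i) '' Set.Icc (k + 1) (m - l - 1)))
    (hdual : ∀ j ∈ Finset.Icc (k + 1) (m - l - 1), ∀ h ∈ Finset.Icc (k + 1) (m - l - 1),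
      (∫ u in (0:ℝ)..1, (D j).eval u * (bernsteinPolynomial ℝ m h).eval u)
        = if j = h then 1 else 0)
    (hC : ∀ j ∈ Finset.Icc (k + 1) (m - l - 1),
      D j = ∑ h ∈ Finset.Icc (k + 1) (m - l - 1), C j h • bernsteinPolynomial ℝ m h) :
    ∀ h : ℕ, k + 1 ≤ h → h ≤ m - l - 2 →
      C (k + 1) h
        = (((h : ℝ) - m) * ((h : ℝ) - k) * ((h : ℝ) + k + 3)) /
            (((h : ℝ) + 1) * (((h : ℝ) - m) ^ 2 - ((l : ℝ) + 1) ^ 2)) *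
          C (k + 1) (h + 1) :=
  dual_basis_coeff_first_row_recurrence_general m k l D C hdual hC
end

section
/- Let m₁, m₂, r, d be natural numbers with r < m₁ and r < m₂, let h₁, h₂ > 0 be real numbers, let q_{1,0},…,q_{1,m₁} ∈ ℝᵈ and q_{2,0},…,q_{2,m₂} ∈ ℝᵈ, and set Q₁(u) = Σ_{j} q_{1,j} B^{m₁}ⱼ(u) and Q₂(u) = Σ_{j} q_{2,j} B^{m₂}ⱼ(u). Define a_{i,j} := hᵢʲ / (mᵢ−j+1)ⱼ for i = 1,2. Then the scaled derivative matching conditions h₁^{−j} Q₁⁽ʲ⁾(1) = h₂^{−j} Q₂⁽ʲ⁾(0) hold for all j = 0,1,…,r if and only if there exist a point κ ∈ ℝᵈ and vectors λ₁,…,λ_r ∈ ℝᵈ such that for every h' = 0,1,…,r: q_{1,m₁−h'} = κ + Σ_{j=1}^{h'} (−1)ʲ C(h',j) a_{1,j} λⱼ and q_{2,h'} = κ + Σ_{j=1}^{h'} C(h',j) a_{2,j} λⱼ. -/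
open Finset intervalIntegral

/-- The Bernstein basis polynomial `B^n_j(u) = C(n,j) u^j (1-u)^(n-j)`. -/
noncomputable def bern (n j : ℕ) (u : ℝ) : ℝ := (n.choose j : ℝ) * u ^ j * (1 - u) ^ (n - j)

/-- `a i j = hᵢ^j / (mᵢ - j + 1)ⱼ`, with the shifted factorial `(c)ⱼ = c (c+1) ⋯ (c+j-1)`. -/
noncomputable def aCoef (hi : ℝ) (mi j : ℕ) : ℝ :=
  hi ^ j / (ascPochhammer ℝ j).eval ((mi : ℝ) - j + 1)

/-!
Differentiating a Bézier curve of degree `m` gives `m` times the Bézier curve of degree `m - 1`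
on the forward differences of the control points. Iterating, the `j`-th derivative at `0` is
`m(m-1)⋯(m-j+1) Δʲq(0)`, and by the symmetry `u ↦ 1 - u` the one at `1` is `(-1)ʲ` times the
same expression for the reversed control points `k ↦ q(m - k)`. Since `aᵢⱼ = hᵢʲ / mᵢ(mᵢ-1)⋯(mᵢ-j+1)`,
the `j`-th matching condition says that `Δʲ` of the reversed `q₁` at `0`, divided by `(-1)ʲ a₁ⱼ`,
equals `Δʲq₂(0) / a₂ⱼ`; call this common value `λⱼ` (so `λ₀ = κ`). By Newton's forward-difference
formula, prescribing `Δʲf(0)` for `j ≤ r` is the same as prescribing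
`f(h') = ∑ⱼ C(h', j) Δʲf(0)` for `h' ≤ r`, which is the stated parametrisation.
-/

open Polynomial fwdDiff

section Bezier

variable {E : Type*} [NormedAddCommGroup E] [NormedSpace ℝ E]

noncomputable def bezier (m : ℕ) (q : ℕ → E) (u : ℝ) : E :=
  ∑ i ∈ range (m + 1), bern m i u • q i

lemma bern_eq_eval_bernsteinPolynomial (n i : ℕ) (u : ℝ) :
    bern n i u = (bernsteinPolynomial ℝ n i).eval u := by
  simp [bern, bernsteinPolynomial]

lemma bern_one_sub {n i : ℕ} (hi : i ≤ n) (u : ℝ) : bern n i (1 - u) = bern n (n - i) u := by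
  simp only [bern_eq_eval_bernsteinPolynomial, ← bernsteinPolynomial.flip ℝ n i hi, eval_comp,
    eval_sub, eval_one, eval_X]

lemma bezier_one_sub (m : ℕ) (q : ℕ → E) (u : ℝ) :
    bezier m q (1 - u) = bezier m (fun k => q (m - k)) u := by
  rw [bezier, ← sum_range_reflect]
  refine sum_congr rfl fun i hi => ?_
  rw [add_tsub_cancel_right, bern_one_sub (Nat.sub_le m i),
    Nat.sub_sub_self (Nat.le_of_lt_succ (mem_range.mp hi))]

lemma bezier_apply_zero (m : ℕ) (q : ℕ → E) : bezier m q 0 = q 0 := by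
  simp [bezier, bern_eq_eval_bernsteinPolynomial, bernsteinPolynomial.eval_at_0]

lemma hasDerivAt_bezier (m : ℕ) (q : ℕ → E) (u : ℝ) :
    HasDerivAt (bezier m q) (m • bezier (m - 1) (Δ_[1] q) u) u := by
  have hsum := HasDerivAt.fun_sum (u := range (m + 1))
    fun i _ => ((bernsteinPolynomial ℝ m i).hasDerivAt u).smul_const (q i)
  simp only [← bern_eq_eval_bernsteinPolynomial] at hsum
  refine hsum.congr_deriv ?_
  cases m with
  | zero => simp [bernsteinPolynomial]
  | succ n =>
    -- `B^n_{n+1} = 0`, so shifting the index only splits off the term `B^n_0 q₀`.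
    have hshift : ∑ i ∈ range (n + 1), bern n i u • q i
        = ∑ i ∈ range (n + 1), bern n (i + 1) u • q (i + 1) + bern n 0 u • q 0 := by
      rw [sum_range_succ' (fun i => bern n i u • q i),
        sum_range_succ (fun i => bern n (i + 1) u • q (i + 1))]
      simp [bern]
    rw [sum_range_succ', bernsteinPolynomial.derivative_zero]
    simp only [bernsteinPolynomial.derivative_succ, eval_mul, eval_sub, eval_neg, eval_natCast,
      add_tsub_cancel_right, bezier, fwdDiff, ← bern_eq_eval_bernsteinPolynomial]
    rw [← Nat.cast_smul_eq_nsmul ℝ]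
    simp only [smul_sub, sum_sub_distrib, mul_smul, sub_smul, neg_smul, ← smul_sum, hshift]
    module

lemma iteratedDeriv_bezier (m j : ℕ) (q : ℕ → E) :
    iteratedDeriv j (bezier m q) = fun u => m.descFactorial j • bezier (m - j) ((Δ_[1])^[j] q) u := by
  induction j with
  | zero => simp
  | succ j ih =>
    funext u
    rw [iteratedDeriv_succ, ih, Nat.descFactorial_succ, mul_comm, mul_smul, ← Nat.sub_sub,
      Function.iterate_succ_apply']
    exact ((hasDerivAt_bezier (m - j) ((Δ_[1])^[j] q) u).const_smul (m.descFactorial j)).deriv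

lemma iteratedDeriv_bezier_apply_zero (m j : ℕ) (q : ℕ → E) :
    iteratedDeriv j (bezier m q) 0 = m.descFactorial j • (Δ_[1])^[j] q 0 := by
  simp only [iteratedDeriv_bezier, bezier_apply_zero]

lemma iteratedDeriv_bezier_apply_one (m j : ℕ) (q : ℕ → E) :
    iteratedDeriv j (bezier m q) 1
      = (-1 : ℝ) ^ j • m.descFactorial j • (Δ_[1])^[j] (fun k => q (m - k)) 0 := by
  have hreflect : bezier m q = fun u => bezier m (fun k => q (m - k)) (1 - u) := by
    funext u
    rw [← bezier_one_sub, sub_sub_cancel]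
  simp only [hreflect, iteratedDeriv_comp_const_sub, sub_self, iteratedDeriv_bezier_apply_zero]

end Bezier

theorem forall_eq_sum_choose_smul_iff {G : Type*} [AddCommGroup G] {f c : ℕ → G} {r : ℕ} :
    (∀ n ≤ r, f n = ∑ j ∈ range (n + 1), n.choose j • c j) ↔
      ∀ j ≤ r, (Δ_[1])^[j] f 0 = c j := by
  have newton (n : ℕ) : f n = ∑ j ∈ range (n + 1), n.choose j • (Δ_[1])^[j] f 0 := by
    simpa using shift_eq_sum_fwdDiff_iter 1 f n 0
  constructor
  · intro h j
    induction j using Nat.strong_induction_on with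
    | _ j ih =>
      intro hj
      have hsum := (h j hj).symm.trans (newton j)
      have hlow : ∑ k ∈ range j, j.choose k • c k = ∑ k ∈ range j, j.choose k • (Δ_[1])^[k] f 0 :=
        sum_congr rfl fun k hk => by rw [ih k (mem_range.1 hk) (by grind)]
      rw [sum_range_succ, sum_range_succ, hlow, Nat.choose_self, one_smul, one_smul] at hsum
      exact (add_left_cancel hsum).symm
  · intro h n hn
    rw [newton n]
    exact sum_congr rfl fun j hj => by rw [h j (by grind)]

section Parameters

variable {E : Type*} [AddCommGroup E] [Module ℝ E]

lemma add_sum_Icc_eq_sum_range_update (κ : E) {a : ℕ → ℝ} (ha : a 0 = 1) (lam : ℕ → E) (n : ℕ) :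
    κ + ∑ j ∈ Icc 1 n, ((n.choose j : ℝ) * a j) • lam j
      = ∑ j ∈ range (n + 1), n.choose j • a j • Function.update lam 0 κ j := by
  rw [sum_range_eq_add_Ico _ (Nat.zero_lt_succ n), Nat.succ_eq_add_one, Ico_add_one_right_eq_Icc]
  simp only [Nat.choose_zero_right, ha, Function.update_self, one_smul]
  congr 1
  refine sum_congr rfl fun j hj => ?_
  rw [Function.update_of_ne (by grind), mul_smul, Nat.cast_smul_eq_nsmul]

lemma forall_eq_add_sum_Icc_iff (f : ℕ → E) (κ : E) {a : ℕ → ℝ} (ha : a 0 = 1) (lam : ℕ → E)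
    (r : ℕ) :
    (∀ n ≤ r, f n = κ + ∑ j ∈ Icc 1 n, ((n.choose j : ℝ) * a j) • lam j) ↔
      ∀ j ≤ r, (Δ_[1])^[j] f 0 = a j • Function.update lam 0 κ j := by
  simp only [add_sum_Icc_eq_sum_range_update κ ha]
  exact forall_eq_sum_choose_smul_iff

lemma forall_inv_smul_eq_iff_exists {x y : ℕ → E} {α β : ℕ → ℝ} {r : ℕ}
    (hα : ∀ j ≤ r, α j ≠ 0) (hβ : ∀ j ≤ r, β j ≠ 0) :
    (∀ j ≤ r, (α j)⁻¹ • x j = (β j)⁻¹ • y j) ↔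
      ∃ c : ℕ → E, ∀ j ≤ r, x j = α j • c j ∧ y j = β j • c j := by
  constructor
  · intro h
    refine ⟨fun j => (β j)⁻¹ • y j, fun j hj => ⟨?_, (smul_inv_smul₀ (hβ j hj) _).symm⟩⟩
    rw [show α j • (β j)⁻¹ • y j = x j by rw [← h j hj, smul_inv_smul₀ (hα j hj)]]
  · rintro ⟨c, hc⟩ j hj
    rw [(hc j hj).1, (hc j hj).2, inv_smul_smul₀ (hα j hj), inv_smul_smul₀ (hβ j hj)]

end Parameters

lemma aCoef_eq_div (h : ℝ) (m j : ℕ) : aCoef h m j = h ^ j / m.descFactorial j := by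
  rw [aCoef, ← descPochhammer_eval_eq_ascPochhammer, descPochhammer_eval_eq_descFactorial]

lemma inv_aCoef (h : ℝ) (m j : ℕ) : (aCoef h m j)⁻¹ = (h ^ j)⁻¹ * m.descFactorial j := by
  rw [aCoef_eq_div, inv_div, div_eq_inv_mul]

lemma aCoef_zero_right (h : ℝ) (m : ℕ) : aCoef h m 0 = 1 := by
  simp [aCoef]

lemma aCoef_ne_zero {h : ℝ} (hh : h ≠ 0) {m j : ℕ} (hj : j ≤ m) : aCoef h m j ≠ 0 := by
  rw [aCoef_eq_div]
  exact div_ne_zero (pow_ne_zero j hh)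
    (Nat.cast_ne_zero.2 (Nat.descFactorial_eq_zero_iff_lt.not.2 (not_lt.2 hj)))

theorem Cr_continuity_iff_parameters (m₁ m₂ r d : ℕ) (hr₁ : r < m₁) (hr₂ : r < m₂)
    (h₁ h₂ : ℝ) (hh₁ : 0 < h₁) (hh₂ : 0 < h₂)
    (q₁ q₂ : ℕ → EuclideanSpace ℝ (Fin d)) :
    (∀ j ≤ r,
        (h₁ ^ j)⁻¹ •
            iteratedDeriv j (fun u : ℝ => ∑ i ∈ range (m₁ + 1), bern m₁ i u • q₁ i) 1
          = (h₂ ^ j)⁻¹ •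
              iteratedDeriv j (fun u : ℝ => ∑ i ∈ range (m₂ + 1), bern m₂ i u • q₂ i) 0) ↔
    (∃ (κ : EuclideanSpace ℝ (Fin d)) (lam : ℕ → EuclideanSpace ℝ (Fin d)),
      ∀ h' ≤ r,
        q₁ (m₁ - h') = κ + ∑ j ∈ Finset.Icc 1 h',
            ((-1 : ℝ) ^ j * (h'.choose j : ℝ) * aCoef h₁ m₁ j) • lam j ∧
        q₂ h' = κ + ∑ j ∈ Finset.Icc 1 h',
            ((h'.choose j : ℝ) * aCoef h₂ m₂ j) • lam j) := by
  set α : ℕ → ℝ := fun j => (-1) ^ j * aCoef h₁ m₁ j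
  have hα : ∀ j ≤ r, α j ≠ 0 := fun j hj =>
    mul_ne_zero (pow_ne_zero j (by norm_num)) (aCoef_ne_zero hh₁.ne' (by omega))
  have hβ : ∀ j ≤ r, aCoef h₂ m₂ j ≠ 0 := fun j hj => aCoef_ne_zero hh₂.ne' (by omega)
  have hderiv : ∀ j ≤ r, ((h₁ ^ j)⁻¹ • iteratedDeriv j (bezier m₁ q₁) 1
        = (h₂ ^ j)⁻¹ • iteratedDeriv j (bezier m₂ q₂) 0 ↔
      (α j)⁻¹ • (Δ_[1])^[j] (fun k => q₁ (m₁ - k)) 0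
        = (aCoef h₂ m₂ j)⁻¹ • (Δ_[1])^[j] q₂ 0) := fun j _ => by
    rw [iteratedDeriv_bezier_apply_one, iteratedDeriv_bezier_apply_zero, mul_inv, inv_aCoef,
      inv_aCoef]
    simp only [smul_smul, ← Nat.cast_smul_eq_nsmul ℝ]
    rw [← inv_pow (-1 : ℝ), inv_neg_one, mul_left_comm]
  have hq₁_iff (κ : EuclideanSpace ℝ (Fin d)) (lam : ℕ → EuclideanSpace ℝ (Fin d)) :
      (∀ h' ≤ r, q₁ (m₁ - h') = κ + ∑ j ∈ Finset.Icc 1 h',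
            ((-1 : ℝ) ^ j * (h'.choose j : ℝ) * aCoef h₁ m₁ j) • lam j) ↔
        ∀ j ≤ r, (Δ_[1])^[j] (fun k => q₁ (m₁ - k)) 0 = α j • Function.update lam 0 κ j := by
    rw [← forall_eq_add_sum_Icc_iff (fun k => q₁ (m₁ - k)) κ (by simp [α, aCoef_zero_right]) lam r]
    simp only [α, mul_comm ((-1 : ℝ) ^ _) ((_ : ℕ) : ℝ), mul_assoc]
  refine (forall₂_congr hderiv).trans ((forall_inv_smul_eq_iff_exists hα hβ).trans ?_)
  simp only [imp_and, forall_and, hq₁_iff,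
    forall_eq_add_sum_Icc_iff q₂ _ (aCoef_zero_right h₂ m₂)]
  exact ⟨fun ⟨c, hc⟩ => ⟨c 0, c, by rwa [Function.update_eq_self]⟩, fun ⟨_, _, h⟩ => ⟨_, h⟩⟩
end
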